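/- For i ≠ j in [r], set β_{i,j} := w(T_i, S_j)/w(T_i). Then for every integer t with 0 ≤ t ≤ 1/α, ∑_{x∈T_i} √(w(x)) · (((1/2)·I_N + (1/2)·Ā)^t g_j)_x ≤ (t²·α² + t·β_{i,j})·w(T_i). -/

import Mathlib

/-!
Conjugating by `diag √w(x)` turns `(1/2)·I + (1/2)·Ā` into the lazy random walk
`P = (1/2)·I + (1/2)·D⁻¹w` with `D = diag w(x)`, so the left-hand side becomes
`Q_t = ∑_{x∈T} w(x)·(P^t 1_S)(x)`, the mass that the walk started from the stationary measure `w`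
restricted to `T` puts on `S` at time `t`. Stationarity of `w` means a step can raise `Q` only
through the mass leaving `T`: at most `w(T,S)/2` of it lands in `S` directly, and the rest, at
most `α·w(T)/2`, sits outside `S`, from where `S` is reached within `t` steps with probability at
most `t·α/2`, since every vertex outside `S` sends at most `α/2` of its mass into `S`. Hence
`Q_{t+1} ≤ Q_t + w(T,S)/2 + t·α²·w(T)/4`, and `Q_t ≤ t·w(T,S)/2 + t²·α²·w(T)/4`.
-/

open Finset Matrix

/-- The degree `w(x) = ∑_{x'} w(x,x')` of a vertex in the positive-pair graph. -/
noncomputable def deg {N : ℕ} (w : Fin N → Fin N → ℝ) (x : Fin N) : ℝ := ∑ x', w x x'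

/-- The normalized adjacency matrix `Ā` with entries `w(x,x')/√(w(x)w(x'))`. -/
noncomputable def nadj {N : ℕ} (w : Fin N → Fin N → ℝ) : Matrix (Fin N) (Fin N) ℝ :=
  Matrix.of fun x x' => w x x' / Real.sqrt (deg w x * deg w x')

/-- The vector with entry `√(w(x))` on a subset `A` and `0` elsewhere. -/
noncomputable def hvec {N : ℕ} (w : Fin N → Fin N → ℝ) (A : Finset (Fin N)) :
    Fin N → ℝ :=
  fun x => if x ∈ A then Real.sqrt (deg w x) else 0

/-- The lazy random-walk matrix `(1/2)·I + (1/2)·Ā`. -/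
noncomputable def lazyA {N : ℕ} (w : Fin N → Fin N → ℝ) : Matrix (Fin N) (Fin N) ℝ :=
  ((1 : ℝ) / 2) • (1 : Matrix (Fin N) (Fin N) ℝ) + ((1 : ℝ) / 2) • nadj w

section RowStochastic

variable {ι : Type*} [Fintype ι] {P : Matrix ι ι ℝ}

lemma mulVec_mono_of_nonneg (hP : ∀ i j, 0 ≤ P i j) {f g : ι → ℝ} (hfg : f ≤ g) :
    P *ᵥ f ≤ P *ᵥ g := fun i =>
  Finset.sum_le_sum fun j _ => mul_le_mul_of_nonneg_left (hfg j) (hP i j)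

variable [DecidableEq ι]

lemma pow_mulVec_indicator_le (hP : P ∈ rowStochastic ℝ ι) {S : Finset ι} {ε : ℝ}
    (hε : 0 ≤ ε) (hS : ∀ y ∉ S, ∑ z ∈ S, P y z ≤ ε) (t : ℕ) :
    P ^ t *ᵥ (S : Set ι).indicator 1 ≤ (S : Set ι).indicator 1 + (t * ε) • 1 := by
  have hstep : P *ᵥ (S : Set ι).indicator 1 ≤ (S : Set ι).indicator 1 + ε • 1 := fun y => by
    have hrow : (P *ᵥ (S : Set ι).indicator 1) y = ∑ z ∈ S, P y z := by
      simp [mulVec, dotProduct, Set.indicator_apply]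
    rw [hrow]
    by_cases hy : y ∈ S
    · calc ∑ z ∈ S, P y z ≤ ∑ z, P y z :=
            Finset.sum_le_sum_of_subset_of_nonneg (Finset.subset_univ S) fun z _ _ => hP.1 y z
        _ = 1 := sum_row_of_mem_rowStochastic hP y
        _ ≤ _ := by simp [hy, hε]
    · simpa [hy] using hS y hy
  induction t with
  | zero => simp
  | succ t ih =>
    calc P ^ (t + 1) *ᵥ (S : Set ι).indicator 1 = P *ᵥ (P ^ t *ᵥ (S : Set ι).indicator 1) := by
          rw [pow_succ', mulVec_mulVec]
      _ ≤ P *ᵥ ((S : Set ι).indicator 1 + (t * ε) • 1) := mulVec_mono_of_nonneg hP.1 ih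
      _ = P *ᵥ (S : Set ι).indicator 1 + (t * ε) • 1 := by
          rw [mulVec_add, mulVec_smul, one_vecMul_of_mem_rowStochastic hP]
      _ ≤ (S : Set ι).indicator 1 + ε • 1 + (t * ε) • 1 := by gcongr
      _ = (S : Set ι).indicator 1 + ((t + 1 : ℕ) * ε) • 1 := by
          rw [add_assoc, ← add_smul]; push_cast; ring_nf

lemma sum_mul_mulVec_le_of_vecMul_eq (hP : ∀ i j, 0 ≤ P i j) {π : ι → ℝ} (hπ0 : 0 ≤ π)
    (hπ : π ᵥ* P = π) (T : Finset ι) {f : ι → ℝ} (hf : 0 ≤ f) :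
    ∑ x ∈ T, π x * (P *ᵥ f) x ≤
      ∑ y ∈ T, π y * f y + ∑ y ∈ Tᶜ, (∑ x ∈ T, π x * P x y) * f y := by
  have hin : ∀ y, ∑ x ∈ T, π x * P x y ≤ π y := fun y =>
    calc ∑ x ∈ T, π x * P x y ≤ ∑ x, π x * P x y :=
          Finset.sum_le_sum_of_subset_of_nonneg (Finset.subset_univ T)
            fun x _ _ => mul_nonneg (hπ0 x) (hP x y)
      _ = π y := congrFun hπ y
  calc ∑ x ∈ T, π x * (P *ᵥ f) x = ∑ y, (∑ x ∈ T, π x * P x y) * f y := by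
        simp only [mulVec, dotProduct, Finset.mul_sum, Finset.sum_mul, mul_assoc]
        exact Finset.sum_comm
    _ = ∑ y ∈ T, (∑ x ∈ T, π x * P x y) * f y + ∑ y ∈ Tᶜ, (∑ x ∈ T, π x * P x y) * f y :=
        (Finset.sum_add_sum_compl T _).symm
    _ ≤ _ := by
        gcongr with y
        · exact hf y
        · exact hin y

end RowStochastic

section LazyWalk

variable {N : ℕ} {w : Fin N → Fin N → ℝ}

noncomputable def randomWalk (w : Fin N → Fin N → ℝ) : Matrix (Fin N) (Fin N) ℝ :=
  Matrix.of fun x y => w x y / deg w x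

noncomputable def lazyWalk (w : Fin N → Fin N → ℝ) : Matrix (Fin N) (Fin N) ℝ :=
  ((1 : ℝ) / 2) • (1 : Matrix (Fin N) (Fin N) ℝ) + ((1 : ℝ) / 2) • randomWalk w

lemma randomWalk_mem_rowStochastic (hnonneg : ∀ x y, 0 ≤ w x y) (hdeg : ∀ x, 0 < deg w x) :
    randomWalk w ∈ rowStochastic ℝ (Fin N) := by
  refine mem_rowStochastic_iff_sum.2 ⟨fun x y => div_nonneg (hnonneg x y) (hdeg x).le, fun x => ?_⟩
  simp only [randomWalk, of_apply, ← Finset.sum_div]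
  exact div_self (hdeg x).ne'

lemma lazyWalk_mem_rowStochastic (hnonneg : ∀ x y, 0 ≤ w x y) (hdeg : ∀ x, 0 < deg w x) :
    lazyWalk w ∈ rowStochastic ℝ (Fin N) :=
  convex_rowStochastic (one_mem _) (randomWalk_mem_rowStochastic hnonneg hdeg)
    (by norm_num) (by norm_num) (by norm_num)

lemma deg_vecMul_randomWalk (hsymm : ∀ x y, w x y = w y x) (hdeg : ∀ x, 0 < deg w x) :
    deg w ᵥ* randomWalk w = deg w := by
  ext y
  simp only [vecMul, dotProduct, randomWalk, of_apply, mul_div_cancel₀ _ (hdeg _).ne']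
  exact Finset.sum_congr rfl fun x _ => hsymm x y

lemma deg_vecMul_lazyWalk (hsymm : ∀ x y, w x y = w y x) (hdeg : ∀ x, 0 < deg w x) :
    deg w ᵥ* lazyWalk w = deg w := by
  rw [lazyWalk, vecMul_add, vecMul_smul, vecMul_smul, vecMul_one, deg_vecMul_randomWalk hsymm hdeg,
    ← add_smul]
  norm_num

lemma deg_mul_lazyWalk_of_ne (hdeg : ∀ x, 0 < deg w x) {x y : Fin N} (hxy : x ≠ y) :
    deg w x * lazyWalk w x y = w x y / 2 := by
  have := (hdeg x).ne'
  simp only [lazyWalk, randomWalk, Matrix.add_apply, Matrix.smul_apply, of_apply, one_apply_ne hxy,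
    smul_eq_mul, mul_zero, zero_add]
  field_simp

lemma diagonal_sqrt_deg_mul_randomWalk (hdeg : ∀ x, 0 < deg w x) :
    diagonal (fun x => √(deg w x)) * randomWalk w = nadj w * diagonal (fun x => √(deg w x)) := by
  ext x y
  have hx := (hdeg x).ne'
  have hx' := (Real.sqrt_pos.2 (hdeg x)).ne'
  have hy' := (Real.sqrt_pos.2 (hdeg y)).ne'
  rw [diagonal_mul, mul_diagonal, randomWalk, nadj, of_apply, of_apply, Real.sqrt_mul (hdeg x).le]
  field_simp
  rw [Real.sq_sqrt (hdeg x).le, mul_comm]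

lemma diagonal_sqrt_deg_mul_lazyWalk (hdeg : ∀ x, 0 < deg w x) :
    diagonal (fun x => √(deg w x)) * lazyWalk w = lazyA w * diagonal (fun x => √(deg w x)) := by
  rw [lazyWalk, lazyA, mul_add, add_mul, Matrix.mul_smul, Matrix.mul_smul, Matrix.smul_mul,
    Matrix.smul_mul, mul_one, one_mul, diagonal_sqrt_deg_mul_randomWalk hdeg]

lemma lazyA_pow_mulVec_hvec (hdeg : ∀ x, 0 < deg w x) (S : Finset (Fin N)) (t : ℕ) (x : Fin N) :
    (lazyA w ^ t *ᵥ hvec w S) x =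
      √(deg w x) * (lazyWalk w ^ t *ᵥ (S : Set (Fin N)).indicator 1) x := by
  have hconj : SemiconjBy _ _ _ := diagonal_sqrt_deg_mul_lazyWalk hdeg
  replace hconj := (hconj.pow_right t).eq
  have hvec_eq : hvec w S = diagonal (fun x => √(deg w x)) *ᵥ (S : Set (Fin N)).indicator 1 := by
    ext y
    simp [hvec, mulVec_diagonal, Set.indicator_apply]
  rw [hvec_eq, mulVec_mulVec, ← hconj, ← mulVec_mulVec, mulVec_diagonal]

lemma lazyWalk_exit_flow_le (hnonneg : ∀ x y, 0 ≤ w x y) (hdeg : ∀ x, 0 < deg w x)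
    {S T : Finset (Fin N)} (hST : Disjoint S T) {α c : ℝ} (hc : 0 ≤ c)
    (hT : ∀ x ∈ T, ∑ y ∈ Tᶜ, w x y ≤ α * deg w x) {f : Fin N → ℝ}
    (hf : f ≤ (S : Set (Fin N)).indicator 1 + c • 1) :
    ∑ y ∈ Tᶜ, (∑ x ∈ T, deg w x * lazyWalk w x y) * f y ≤
      (∑ x ∈ T, ∑ y ∈ S, w x y) / 2 + c * (α * ∑ x ∈ T, deg w x) / 2 := by
  have hflow : ∀ y ∈ Tᶜ, ∑ x ∈ T, deg w x * lazyWalk w x y = (∑ x ∈ T, w x y) / 2 :=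
    fun y hy => by
      rw [Finset.sum_div]
      exact Finset.sum_congr rfl fun x hx =>
        deg_mul_lazyWalk_of_ne hdeg fun h => Finset.mem_compl.1 hy (h ▸ hx)
  calc ∑ y ∈ Tᶜ, (∑ x ∈ T, deg w x * lazyWalk w x y) * f y
      ≤ ∑ y ∈ Tᶜ, (∑ x ∈ T, w x y) / 2 * ((S : Set (Fin N)).indicator 1 y + c) := by
        refine Finset.sum_le_sum fun y hy => ?_
        rw [hflow y hy]
        have hfy := hf y
        simp only [Pi.add_apply, Pi.smul_apply, Pi.one_apply, smul_eq_mul, mul_one] at hfy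
        exact mul_le_mul_of_nonneg_left hfy
          (div_nonneg (Finset.sum_nonneg fun x _ => hnonneg x y) zero_le_two)
    _ = (∑ y ∈ Tᶜ, (S : Set (Fin N)).indicator (fun y => ∑ x ∈ T, w x y) y) / 2 +
          c * (∑ y ∈ Tᶜ, ∑ x ∈ T, w x y) / 2 := by
        rw [Finset.sum_div, Finset.mul_sum, Finset.sum_div, ← Finset.sum_add_distrib]
        refine Finset.sum_congr rfl fun y _ => ?_
        by_cases hy : y ∈ S <;> simp [hy] <;> ring
    _ = (∑ x ∈ T, ∑ y ∈ S, w x y) / 2 + c * (∑ x ∈ T, ∑ y ∈ Tᶜ, w x y) / 2 := by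
        rw [Finset.sum_indicator_subset _ (Finset.subset_compl_iff_disjoint_right.2 hST),
          Finset.sum_comm (s := S), Finset.sum_comm (s := Tᶜ)]
    _ ≤ _ := by
        rw [Finset.mul_sum (a := α)]
        gcongr with x hx
        exact hT x hx

lemma sum_deg_mul_lazyWalk_pow_indicator_le (hsymm : ∀ x y, w x y = w y x)
    (hnonneg : ∀ x y, 0 ≤ w x y) (hdeg : ∀ x, 0 < deg w x) {S T : Finset (Fin N)}
    (hST : Disjoint S T) {α : ℝ} (hα : 0 ≤ α)
    (hT : ∀ x ∈ T, ∑ y ∈ Tᶜ, w x y ≤ α * deg w x)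
    (hS : ∀ y ∉ S, ∑ z ∈ S, w y z ≤ α * deg w y) (t : ℕ) :
    ∑ x ∈ T, deg w x * (lazyWalk w ^ t *ᵥ (S : Set (Fin N)).indicator 1) x ≤
      t * (∑ x ∈ T, ∑ y ∈ S, w x y) / 2 + t ^ 2 * α ^ 2 * (∑ x ∈ T, deg w x) / 4 := by
  have hP := lazyWalk_mem_rowStochastic hnonneg hdeg
  have hstep : ∀ y ∉ S, ∑ z ∈ S, lazyWalk w y z ≤ α / 2 := fun y hy => by
    refine le_of_mul_le_mul_left ?_ (hdeg y)
    calc deg w y * ∑ z ∈ S, lazyWalk w y z = (∑ z ∈ S, w y z) / 2 := by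
          rw [Finset.mul_sum, Finset.sum_div]
          exact Finset.sum_congr rfl fun z hz =>
            deg_mul_lazyWalk_of_ne hdeg fun h => hy (h ▸ hz)
      _ ≤ deg w y * (α / 2) := by linarith [hS y hy]
  have hD : 0 ≤ ∑ x ∈ T, deg w x := Finset.sum_nonneg fun x _ => (hdeg x).le
  set W := ∑ x ∈ T, ∑ y ∈ S, w x y
  set D := ∑ x ∈ T, deg w x
  induction t with
  | zero =>
    rw [pow_zero, one_mulVec, Finset.sum_eq_zero fun x hx => ?_]
    · simp
    · rw [Set.indicator_of_notMem (Finset.disjoint_right.1 hST hx), mul_zero]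
  | succ t ih =>
    set f := lazyWalk w ^ t *ᵥ (S : Set (Fin N)).indicator 1
    have hf0 : 0 ≤ f := nonneg_mulVec_of_mem_rowStochastic (pow_mem hP t)
      (Set.indicator_nonneg fun _ _ => zero_le_one)
    have hf1 := pow_mulVec_indicator_le hP (by positivity) hstep t
    rw [pow_succ', ← mulVec_mulVec]
    calc ∑ x ∈ T, deg w x * (lazyWalk w *ᵥ f) x
        ≤ ∑ x ∈ T, deg w x * f x + ∑ y ∈ Tᶜ, (∑ x ∈ T, deg w x * lazyWalk w x y) * f y :=
          sum_mul_mulVec_le_of_vecMul_eq hP.1 (fun x => (hdeg x).le)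
            (deg_vecMul_lazyWalk hsymm hdeg) T hf0
      _ ≤ (t * W / 2 + t ^ 2 * α ^ 2 * D / 4) + (W / 2 + t * (α / 2) * (α * D) / 2) :=
          add_le_add ih (lazyWalk_exit_flow_le hnonneg hdeg hST (by positivity) hT hf1)
      _ ≤ _ := by
          push_cast
          nlinarith [mul_nonneg t.cast_nonneg (mul_nonneg (sq_nonneg α) hD)]

end LazyWalk

section Partition

variable {ι κ : Type*} {C : κ → Finset ι}

lemma disjoint_of_existsUnique_mem (hpart : ∀ x, ∃! k, x ∈ C k) {a b : κ} (hab : a ≠ b) :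
    Disjoint (C a) (C b) :=
  Finset.disjoint_left.2 fun x ha hb => hab ((hpart x).unique ha hb)

lemma sum_le_of_notMem_of_existsUnique_mem [Fintype ι] [DecidableEq ι] {w : ι → ι → ℝ}
    (hnonneg : ∀ x y, 0 ≤ w x y) {d : ι → ℝ} {α : ℝ} (hpart : ∀ x, ∃! k, x ∈ C k)
    (hexp : ∀ k, ∀ x ∈ C k, ∑ y ∈ (C k)ᶜ, w x y ≤ α * d x) (k : κ) {y : ι} (hy : y ∉ C k) :
    ∑ z ∈ C k, w y z ≤ α * d y := by
  obtain ⟨k', hk', -⟩ := hpart y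
  have hsub : C k ⊆ (C k')ᶜ := Finset.subset_compl_iff_disjoint_right.2 <|
    disjoint_of_existsUnique_mem hpart fun h => hy (h ▸ hk')
  exact (Finset.sum_le_sum_of_subset_of_nonneg hsub fun z _ _ => hnonneg y z).trans (hexp k' y hk')

end Partition

/-- Upper bound on the probability that a lazy random walk
started in `T_i` arrives in `S_j` for `j ≠ i`. -/
theorem stmt13 {N m r : ℕ} (w : Fin N → Fin N → ℝ)
    (hsymm : ∀ x x', w x x' = w x' x)
    (hnonneg : ∀ x x', 0 ≤ w x x')
    (hdeg : ∀ x, 0 < deg w x)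
    (C : Fin m → Finset (Fin N))
    (hpart : ∀ x : Fin N, ∃! i : Fin m, x ∈ C i)
    (α : ℝ) (hα0 : 0 < α)
    (hexp : ∀ i : Fin m, ∀ x ∈ C i, (∑ x' ∈ (C i)ᶜ, w x x') ≤ α * deg w x)
    (hrm : 2 * r ≤ m)
    (S T : Fin r → Finset (Fin N))
    (hS : ∀ i : Fin r, S i = C ⟨i.1, by have := i.isLt; omega⟩)
    (hT : ∀ i : Fin r, T i = C ⟨r + i.1, by have := i.isLt; omega⟩)
    (i j : Fin r) :
    ∀ t : ℕ, (t : ℝ) ≤ 1 / α →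
      (∑ x ∈ T i, Real.sqrt (deg w x) * ((lazyA w ^ t) *ᵥ hvec w (S j)) x) ≤
        ((t : ℝ) ^ 2 * α ^ 2 +
            (t : ℝ) * ((∑ x ∈ T i, ∑ x' ∈ S j, w x x') / (∑ x ∈ T i, deg w x))) *
          (∑ x ∈ T i, deg w x) := by
  intro t _
  have hST : Disjoint (S j) (T i) := by
    rw [hS, hT]
    exact disjoint_of_existsUnique_mem hpart fun h => absurd (congrArg Fin.val h) (by simp; omega)
  have hTout : ∀ x ∈ T i, ∑ y ∈ (T i)ᶜ, w x y ≤ α * deg w x := hT i ▸ hexp _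
  have hSin : ∀ y ∉ S j, ∑ z ∈ S j, w y z ≤ α * deg w y := fun y hy =>
    hS j ▸ sum_le_of_notMem_of_existsUnique_mem hnonneg hpart hexp _ (hS j ▸ hy)
  set W := ∑ x ∈ T i, ∑ x' ∈ S j, w x x'
  set D := ∑ x ∈ T i, deg w x
  have hWD : W / D * D = W := by
    rcases (T i).eq_empty_or_nonempty with hTe | hTne
    · simp [W, hTe]
    · exact div_mul_cancel₀ _ (Finset.sum_pos (fun x _ => hdeg x) hTne).ne'
  have hW : 0 ≤ W := Finset.sum_nonneg fun x _ => Finset.sum_nonneg fun y _ => hnonneg x y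
  have hD : 0 ≤ D := Finset.sum_nonneg fun x _ => (hdeg x).le
  calc ∑ x ∈ T i, √(deg w x) * (lazyA w ^ t *ᵥ hvec w (S j)) x
      = ∑ x ∈ T i, deg w x * (lazyWalk w ^ t *ᵥ (S j : Set (Fin N)).indicator 1) x :=
        Finset.sum_congr rfl fun x _ => by
          rw [lazyA_pow_mulVec_hvec hdeg, ← mul_assoc, Real.mul_self_sqrt (hdeg x).le]
    _ ≤ t * W / 2 + t ^ 2 * α ^ 2 * D / 4 :=
        sum_deg_mul_lazyWalk_pow_indicator_le hsymm hnonneg hdeg hST hα0.le hTout hSin t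
    _ ≤ (t ^ 2 * α ^ 2 + t * (W / D)) * D := by
        rw [add_mul, mul_assoc (t : ℝ), hWD]
        nlinarith [mul_nonneg t.cast_nonneg hW, mul_nonneg (sq_nonneg ((t : ℝ) * α)) hD]
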